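/- Break-even condition: if (s,p) is an optimal contract, then s satisfies (BE), i.e. δ·(π(s_{t+1}) − π(s_t)) = w(s_{t−1}) − w(s_t) for every t ≥ 1. -/

import Mathlib

open Set Filter

/-- Principal's continuation value `Π_t(s,p) = Σ_{τ=t}^∞ δ^{τ−t}(π(s_τ) − p_τ)`. -/
noncomputable def PiVal (δ : ℝ) (π : ℝ → ℝ) (s p : ℕ → ℝ) (t : ℕ) : ℝ :=
  ∑' k : ℕ, δ ^ k * (π (s (t + k)) - p (t + k))

/-- Expert's continuation value `W_t(s,p) = Σ_{τ=t}^∞ δ^{τ−t}(w(s_τ) + p_τ)`. -/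
noncomputable def WVal (δ : ℝ) (w : ℝ → ℝ) (s p : ℕ → ℝ) (t : ℕ) : ℝ :=
  ∑' k : ℕ, δ ^ k * (w (s (t + k)) + p (t + k))

/-- A contract: `s` takes values in `[0,1]`, `s 0 = 0`, and `t ↦ δ^t·p_t` is summable. -/
def IsContract (δ : ℝ) (s p : ℕ → ℝ) : Prop :=
  (∀ t, s t ∈ Set.Icc (0 : ℝ) 1) ∧ s 0 = 0 ∧ Summable fun t => δ ^ t * p t

/-- Implementability: feasibility (monotone `s`, nonnegative `p`) plus (P-IC) and (E-IC). -/
def Implementable (δ : ℝ) (π w : ℝ → ℝ) (s p : ℕ → ℝ) : Prop :=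
  IsContract δ s p ∧ Monotone s ∧ (∀ t, 0 ≤ p t) ∧
  (∀ t, π (s t) / (1 - δ) ≤ PiVal δ π s p t) ∧
  (∀ t, w (s t) / (1 - δ) ≤ WVal δ w s p (t + 1))

/-- An optimal contract maximizes the principal's time-0 profit among implementable contracts. -/
def Optimal (δ : ℝ) (π w : ℝ → ℝ) (s p : ℕ → ℝ) : Prop :=
  Implementable δ π w s p ∧
  ∀ s' p' : ℕ → ℝ, Implementable δ π w s' p' → PiVal δ π s' p' 0 ≤ PiVal δ π s p 0

/-- The break-even condition (BE): `δ·(π(s_{t+1}) − π(s_t)) = w(s_{t−1}) − w(s_t)` for every `t ≥ 1`. -/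
def BE (δ : ℝ) (π w : ℝ → ℝ) (s : ℕ → ℝ) : Prop :=
  ∀ t : ℕ, 1 ≤ t → δ * (π (s (t + 1)) - π (s t)) = w (s (t - 1)) - w (s t)

/-!
Paying the expert exactly what makes (E-IC) bind, `q_t = (w(s_{t-1}) - w(s_t))/(1-δ)`, is
optimal along any path, so (P-IC) becomes nonnegativity of a slack `a_t`, and
`a_t - δ a_{t+1} = (δ (π(s_{t+1}) - π(s_t)) - (w(s_{t-1}) - w(s_t)))/(1-δ)`.
At an optimum `a_t = 0` whenever `s_t < s_{t+1}`: otherwise raising `s_t` slightly keeps (P-IC)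
and, `π + w` being increasing, raises the profit. When `s_t = s_{t+1}` the identity gives
`a_t ≤ δ a_{t+1}`. A bounded nonnegative sequence with `a_t ≤ δ a_{t+1}` vanishes, and then the
identity is (BE).
-/

open Topology

noncomputable def discSum (δ : ℝ) (f : ℕ → ℝ) (t : ℕ) : ℝ :=
  ∑' k : ℕ, δ ^ k * f (t + k)

section discSum

variable {δ : ℝ} {f g : ℕ → ℝ} {t : ℕ}

theorem summable_of_norm_le (hδ₀ : 0 ≤ δ) (hδ₁ : δ < 1) {C : ℝ}
    (hf : ∀ n, ‖f n‖ ≤ C) : Summable fun n => δ ^ n * f n :=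
  .of_norm_bounded ((summable_geometric_of_lt_one hδ₀ hδ₁).mul_right C) fun n => by
    rw [norm_mul, norm_pow, Real.norm_of_nonneg hδ₀]
    exact mul_le_mul_of_nonneg_left (hf n) (pow_nonneg hδ₀ n)

theorem summable_tail (hδ : δ ≠ 0) (hf : Summable fun n => δ ^ n * f n)
    (t : ℕ) : Summable fun k => δ ^ k * f (t + k) :=
  (((summable_nat_add_iff t).2 hf).mul_left (δ ^ t)⁻¹).congr fun k => by
    rw [add_comm k t, pow_add]
    field_simp

theorem discSum_eq_add (hf : Summable fun k => δ ^ k * f (t + k)) :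
    discSum δ f t = f t + δ * discSum δ f (t + 1) := by
  rw [discSum, hf.tsum_eq_zero_add, discSum, ← tsum_mul_left]
  congr 1
  · simp
  · exact tsum_congr fun k => by rw [show t + (k + 1) = t + 1 + k by omega]; ring

theorem discSum_sub_mul_succ (hf : Summable fun k => δ ^ k * f (t + k)) :
    discSum δ (fun n => f n - δ * f (n + 1)) t = f t := by
  have hf' : Summable fun k => δ ^ (k + 1) * f (t + (k + 1)) := (summable_nat_add_iff 1).2 hf
  calc discSum δ (fun n => f n - δ * f (n + 1)) t
      = ∑' k, (δ ^ k * f (t + k) - δ ^ (k + 1) * f (t + (k + 1))) :=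
        tsum_congr fun k => by rw [← add_assoc]; ring
    _ = f t := by rw [hf.tsum_sub hf', hf.tsum_eq_zero_add]; simp

theorem discSum_mono (hδ : 0 ≤ δ) (hf : Summable fun k => δ ^ k * f (t + k))
    (hg : Summable fun k => δ ^ k * g (t + k)) (hfg : ∀ n, f n ≤ g n) :
    discSum δ f t ≤ discSum δ g t :=
  hf.tsum_le_tsum (fun k => mul_le_mul_of_nonneg_left (hfg _) (pow_nonneg hδ k)) hg

theorem discSum_le (hδ₀ : 0 ≤ δ) (hδ₁ : δ < 1) (hf : Summable fun k => δ ^ k * f (t + k))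
    {C : ℝ} (hC : ∀ n, f n ≤ C) : discSum δ f t ≤ C / (1 - δ) := by
  calc discSum δ f t ≤ discSum δ (fun _ => C) t :=
        discSum_mono hδ₀ hf ((summable_geometric_of_lt_one hδ₀ hδ₁).mul_right C) hC
    _ = C / (1 - δ) := by
        rw [discSum, tsum_mul_right, tsum_geometric_of_lt_one hδ₀ hδ₁, div_eq_inv_mul]

theorem discSum_comp_update {σ : ℕ → ℝ} (φ : ℝ → ℝ)
    (hf : Summable fun k => δ ^ k * φ (σ (t + k))) {m : ℕ} (hm : t ≤ m) (x : ℝ) :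
    discSum δ (fun n => φ (Function.update σ m x n)) t
      = discSum δ (fun n => φ (σ n)) t + δ ^ (m - t) * (φ x - φ (σ m)) := by
  have h := hf.hasSum.update (m - t) (δ ^ (m - t) * φ x)
  rw [Nat.add_sub_cancel' hm] at h
  convert h.tsum_eq using 1
  · refine tsum_congr fun k => ?_
    rcases eq_or_ne k (m - t) with rfl | hk
    · simp [Nat.add_sub_cancel' hm]
    · simp only [Function.update_of_ne hk, Function.update_of_ne (show t + k ≠ m by omega)]
  · rw [discSum]; ring

end discSum

theorem exists_mem_Ioc_lt {g : ℝ → ℝ} {c d r : ℝ} (hcd : c < d)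
    (hg : ContinuousWithinAt g (Ioc c d) c) (hr : g c < r) : ∃ x ∈ Ioc c d, g x < r := by
  have hev := Tendsto.eventually_lt_const hr hg
  rw [nhdsWithin_Ioc_eq_nhdsGT hcd] at hev
  obtain ⟨x, hx, hxc⟩ := (hev.and (Ioc_mem_nhdsGT hcd)).exists
  exact ⟨x, hxc, hx⟩

theorem Monotone.update_nat {α : Type*} [Preorder α] {σ : ℕ → α} (hσ : Monotone σ) {m : ℕ}
    {x : α} (h₁ : σ m ≤ x) (h₂ : x ≤ σ (m + 1)) : Monotone (Function.update σ m x) := by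
  refine monotone_nat_of_le_succ fun n => ?_
  rcases eq_or_ne n m with rfl | hn
  · simpa using h₂
  rcases eq_or_ne (n + 1) m with rfl | hn'
  · simpa [hn] using (hσ n.le_succ).trans h₁
  · simpa [hn, hn'] using hσ n.le_succ

theorem nonpos_of_le_mul_succ {δ C : ℝ} {a : ℕ → ℝ} (hδ₀ : 0 ≤ δ) (hδ₁ : δ < 1)
    (ha : ∀ n, a n ≤ δ * a (n + 1)) (hC : ∀ n, a n ≤ C) (n : ℕ) : a n ≤ 0 := by
  have hpow : ∀ k n, a n ≤ δ ^ k * C := by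
    intro k
    induction k with
    | zero => simpa using hC
    | succ k ih =>
      intro n
      calc a n ≤ δ * a (n + 1) := ha n
        _ ≤ δ * (δ ^ k * C) := mul_le_mul_of_nonneg_left (ih _) hδ₀
        _ = δ ^ (k + 1) * C := by ring
  have hlim : Tendsto (fun k => δ ^ k * C) atTop (𝓝 0) := by
    simpa using (tendsto_pow_atTop_nhds_zero_of_lt_one hδ₀ hδ₁).mul_const C
  exact ge_of_tendsto' hlim fun k => hpow k n

-- The payments making (E-IC) bind at every date; `t - 1` truncates, so the payment at `0` is `0`.
noncomputable def bindingPay (δ : ℝ) (w : ℝ → ℝ) (σ : ℕ → ℝ) (t : ℕ) : ℝ :=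
  (w (σ (t - 1)) - w (σ t)) / (1 - δ)

-- The (P-IC) slack `Π_t - π(σ_t)/(1-δ)` of `(σ, bindingPay δ w σ)`, written with
-- `Π_t + W_t = Σ_k δ^k (π + w)(σ_{t+k})` and `W_t = w(σ_{t-1})/(1-δ)`.
noncomputable def slack (δ : ℝ) (π w : ℝ → ℝ) (σ : ℕ → ℝ) (t : ℕ) : ℝ :=
  discSum δ (fun n => π (σ n) + w (σ n)) t - (w (σ (t - 1)) + π (σ t)) / (1 - δ)

section Contract

variable {δ : ℝ} {π w : ℝ → ℝ} {σ : ℕ → ℝ}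

theorem summable_comp_of_continuousOn (hδ : δ ∈ Ioo 0 1) {φ : ℝ → ℝ}
    (hφ : ContinuousOn φ (Icc 0 1)) (hσ : ∀ n, σ n ∈ Icc (0 : ℝ) 1) (t : ℕ) :
    Summable fun k => δ ^ k * φ (σ (t + k)) := by
  obtain ⟨C, hC⟩ := isCompact_Icc.exists_bound_of_continuousOn hφ
  exact summable_of_norm_le hδ.1.le hδ.2 fun k => hC _ (hσ _)

theorem summable_bindingPay (hδ : δ ∈ Ioo 0 1) (hw : ContinuousOn w (Icc 0 1))
    (hσ : ∀ n, σ n ∈ Icc (0 : ℝ) 1) : Summable fun n => δ ^ n * bindingPay δ w σ n := by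
  obtain ⟨C, hC⟩ := isCompact_Icc.exists_bound_of_continuousOn hw
  refine summable_of_norm_le hδ.1.le hδ.2 (C := (C + C) / (1 - δ)) fun n => ?_
  have h1δ : 0 < 1 - δ := sub_pos.2 hδ.2
  rw [bindingPay, norm_div, Real.norm_of_nonneg h1δ.le]
  gcongr
  exact (norm_sub_le _ _).trans (add_le_add (hC _ (hσ _)) (hC _ (hσ _)))

theorem bindingPay_nonneg (hδ : δ < 1) (hw : AntitoneOn w (Icc 0 1))
    (hσ : ∀ n, σ n ∈ Icc (0 : ℝ) 1) (hmono : Monotone σ) (t : ℕ) : 0 ≤ bindingPay δ w σ t :=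
  div_nonneg (sub_nonneg.2 (hw (hσ _) (hσ _) (hmono (Nat.sub_le t 1)))) (sub_pos.2 hδ).le

theorem WVal_bindingPay (hδ : δ ∈ Ioo 0 1) (hw : ContinuousOn w (Icc 0 1))
    (hσ : ∀ n, σ n ∈ Icc (0 : ℝ) 1) (t : ℕ) :
    WVal δ w σ (bindingPay δ w σ) t = w (σ (t - 1)) / (1 - δ) := by
  have h1δ : 1 - δ ≠ 0 := (sub_pos.2 hδ.2).ne'
  calc WVal δ w σ (bindingPay δ w σ) t
      = discSum δ (fun n => w (σ (n - 1)) / (1 - δ) - δ * (w (σ (n + 1 - 1)) / (1 - δ))) t := by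
        refine tsum_congr fun k => ?_
        simp only [bindingPay, Nat.add_sub_cancel]
        field_simp
        ring
    _ = w (σ (t - 1)) / (1 - δ) :=
        discSum_sub_mul_succ
          (summable_comp_of_continuousOn hδ (hw.div_const _) (fun n => hσ (n - 1)) t)

theorem PiVal_add_WVal (hδ : δ ∈ Ioo 0 1) (hπ : ContinuousOn π (Icc 0 1))
    (hw : ContinuousOn w (Icc 0 1)) (hσ : ∀ n, σ n ∈ Icc (0 : ℝ) 1) {p : ℕ → ℝ}
    (hp : Summable fun n => δ ^ n * p n) (t : ℕ) :
    PiVal δ π σ p t + WVal δ w σ p t = discSum δ (fun n => π (σ n) + w (σ n)) t := by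
  have hp' := summable_tail hδ.1.ne' hp t
  have hπp := (summable_comp_of_continuousOn hδ hπ hσ t).sub hp'
  have hwp := (summable_comp_of_continuousOn hδ hw hσ t).add hp'
  simp only [← mul_sub, ← mul_add] at hπp hwp
  rw [PiVal, WVal, ← hπp.tsum_add hwp]
  exact tsum_congr fun k => by ring

theorem PiVal_bindingPay (hδ : δ ∈ Ioo 0 1) (hπ : ContinuousOn π (Icc 0 1))
    (hw : ContinuousOn w (Icc 0 1)) (hσ : ∀ n, σ n ∈ Icc (0 : ℝ) 1) (t : ℕ) :
    PiVal δ π σ (bindingPay δ w σ) t = slack δ π w σ t + π (σ t) / (1 - δ) := by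
  rw [slack, ← PiVal_add_WVal hδ hπ hw hσ (summable_bindingPay hδ hw hσ) t,
    WVal_bindingPay hδ hw hσ]
  ring

theorem implementable_bindingPay_iff (hδ : δ ∈ Ioo 0 1) (hπ : ContinuousOn π (Icc 0 1))
    (hw : ContinuousOn w (Icc 0 1)) (hwa : AntitoneOn w (Icc 0 1))
    (hσ : ∀ n, σ n ∈ Icc (0 : ℝ) 1) (hσ0 : σ 0 = 0) (hmono : Monotone σ) :
    Implementable δ π w σ (bindingPay δ w σ) ↔ ∀ t, 0 ≤ slack δ π w σ t := by
  have hP t : π (σ t) / (1 - δ) ≤ PiVal δ π σ (bindingPay δ w σ) t ↔ 0 ≤ slack δ π w σ t := by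
    rw [PiVal_bindingPay hδ hπ hw hσ, le_add_iff_nonneg_left]
  refine ⟨fun h t => (hP t).1 (h.2.2.2.1 t), fun h => ⟨⟨hσ, hσ0, summable_bindingPay hδ hw hσ⟩,
    hmono, bindingPay_nonneg hδ.2 hwa hσ hmono, fun t => (hP t).2 (h t), fun t => ?_⟩⟩
  rw [WVal_bindingPay hδ hw hσ, Nat.add_sub_cancel]

theorem slack_sub_mul_slack_succ (hδ : δ ∈ Ioo 0 1) (hπ : ContinuousOn π (Icc 0 1))
    (hw : ContinuousOn w (Icc 0 1)) (hσ : ∀ n, σ n ∈ Icc (0 : ℝ) 1) (t : ℕ) :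
    slack δ π w σ t - δ * slack δ π w σ (t + 1)
      = (δ * (π (σ (t + 1)) - π (σ t)) - (w (σ (t - 1)) - w (σ t))) / (1 - δ) := by
  have h1δ : 1 - δ ≠ 0 := (sub_pos.2 hδ.2).ne'
  rw [slack, slack, discSum_eq_add (f := fun n => π (σ n) + w (σ n))
    (summable_comp_of_continuousOn hδ (hπ.add hw) hσ t), Nat.add_sub_cancel]
  field_simp
  ring

theorem exists_slack_le (hδ : δ ∈ Ioo 0 1) (hπ : ContinuousOn π (Icc 0 1))
    (hw : ContinuousOn w (Icc 0 1)) (hσ : ∀ n, σ n ∈ Icc (0 : ℝ) 1) :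
    ∃ C, ∀ t, slack δ π w σ t ≤ C := by
  obtain ⟨A, hA⟩ := isCompact_Icc.exists_bound_of_continuousOn hπ
  obtain ⟨B, hB⟩ := isCompact_Icc.exists_bound_of_continuousOn hw
  have hπ' n := abs_le.1 (hA _ (hσ n))
  have hw' n := abs_le.1 (hB _ (hσ n))
  refine ⟨(A + B) / (1 - δ) + (A + B) / (1 - δ), fun t => ?_⟩
  have hQ := discSum_le (f := fun n => π (σ n) + w (σ n)) hδ.1.le hδ.2
    (summable_comp_of_continuousOn hδ (hπ.add hw) hσ t)
    (C := A + B) fun n => add_le_add (hπ' n).2 (hw' n).2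
  have hwπ : -((A + B) / (1 - δ)) ≤ (w (σ (t - 1)) + π (σ t)) / (1 - δ) := by
    rw [← neg_div]
    exact div_le_div_of_nonneg_right (by linarith [(hπ' t).1, (hw' (t - 1)).1])
      (sub_pos.2 hδ.2).le
  rw [slack]
  linarith

theorem Implementable.div_le_WVal {s p : ℕ → ℝ} (h : Implementable δ π w s p)
    (hδ : δ ∈ Ioo 0 1) (hw : ContinuousOn w (Icc 0 1)) (t : ℕ) :
    w (s (t - 1)) / (1 - δ) ≤ WVal δ w s p t := by
  obtain ⟨⟨hs, -, hp⟩, -, hp0, -, hE⟩ := h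
  cases t with
  | succ t => exact hE t
  | zero =>
    have hrec : WVal δ w s p 0 = w (s 0) + p 0 + δ * WVal δ w s p 1 :=
      discSum_eq_add (f := fun n => w (s n) + p n) <| by
        simpa only [mul_add] using
          (summable_comp_of_continuousOn hδ hw hs 0).add (summable_tail hδ.1.ne' hp 0)
    have h1δ : 1 - δ ≠ 0 := (sub_pos.2 hδ.2).ne'
    calc w (s (0 - 1)) / (1 - δ) = w (s 0) + 0 + δ * (w (s 0) / (1 - δ)) := by
          field_simp
          ring
      _ ≤ w (s 0) + p 0 + δ * WVal δ w s p 1 := by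
          gcongr
          · exact hp0 0
          · exact hδ.1.le
          · exact hE 0
      _ = WVal δ w s p 0 := hrec.symm

theorem Implementable.PiVal_le_PiVal_bindingPay {s p : ℕ → ℝ} (h : Implementable δ π w s p)
    (hδ : δ ∈ Ioo 0 1) (hπ : ContinuousOn π (Icc 0 1)) (hw : ContinuousOn w (Icc 0 1)) (t : ℕ) :
    PiVal δ π s p t ≤ PiVal δ π s (bindingPay δ w s) t := by
  have hs := h.1.1
  have hp := PiVal_add_WVal hδ hπ hw hs h.1.2.2 t
  have hq := PiVal_add_WVal hδ hπ hw hs (summable_bindingPay hδ hw hs) t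
  rw [WVal_bindingPay hδ hw hs] at hq
  linarith [h.div_le_WVal hδ hw t]

theorem Optimal.optimal_bindingPay {s p : ℕ → ℝ} (h : Optimal δ π w s p) (hδ : δ ∈ Ioo 0 1)
    (hπ : ContinuousOn π (Icc 0 1)) (hw : ContinuousOn w (Icc 0 1))
    (hwa : AntitoneOn w (Icc 0 1)) : Optimal δ π w s (bindingPay δ w s) := by
  obtain ⟨himpl, hbest⟩ := h
  have hle := himpl.PiVal_le_PiVal_bindingPay hδ hπ hw
  obtain ⟨⟨hs, hs0, -⟩, hmono, -, hP, -⟩ := himpl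
  refine ⟨(implementable_bindingPay_iff hδ hπ hw hwa hs hs0 hmono).2 fun t => ?_,
    fun s' p' h' => (hbest s' p' h').trans (hle 0)⟩
  have := (hP t).trans (hle t)
  rw [PiVal_bindingPay hδ hπ hw hs] at this
  linarith

theorem slack_le_slack_of_le (hδ : δ ∈ Ioo 0 1) (hπ : ContinuousOn π (Icc 0 1))
    (hw : ContinuousOn w (Icc 0 1)) (hGm : MonotoneOn (fun x => π x + w x) (Icc 0 1))
    (hwa : AntitoneOn w (Icc 0 1)) {σ' : ℕ → ℝ} (hσ : ∀ n, σ n ∈ Icc (0 : ℝ) 1)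
    (hσ' : ∀ n, σ' n ∈ Icc (0 : ℝ) 1) (hle : σ ≤ σ') {t : ℕ} (ht : σ' t = σ t) :
    slack δ π w σ t ≤ slack δ π w σ' t := by
  rw [slack, slack, ht]
  refine sub_le_sub ?_ (div_le_div_of_nonneg_right ?_ (sub_pos.2 hδ.2).le)
  · exact discSum_mono (f := fun n => π (σ n) + w (σ n)) (g := fun n => π (σ' n) + w (σ' n))
      hδ.1.le (summable_comp_of_continuousOn hδ (hπ.add hw) hσ t)
      (summable_comp_of_continuousOn hδ (hπ.add hw) hσ' t) fun n => hGm (hσ n) (hσ' n) (hle n)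
  · exact add_le_add_left (hwa (hσ _) (hσ' _) (hle _)) _

theorem slack_update_zero (hδ : δ ∈ Ioo 0 1) (hπ : ContinuousOn π (Icc 0 1))
    (hw : ContinuousOn w (Icc 0 1)) (hσ : ∀ n, σ n ∈ Icc (0 : ℝ) 1) {m : ℕ} (hm : m ≠ 0)
    (x : ℝ) : slack δ π w (Function.update σ m x) 0
      = slack δ π w σ 0 + δ ^ m * (π x + w x - (π (σ m) + w (σ m))) := by
  have h := discSum_comp_update (fun y => π y + w y)
    (summable_comp_of_continuousOn hδ (hπ.add hw) hσ 0) (Nat.zero_le m) x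
  simp only [Nat.sub_zero] at h
  rw [slack, slack, h, Function.update_of_ne hm.symm]
  ring

theorem slack_update_self (hδ : δ ∈ Ioo 0 1) (hπ : ContinuousOn π (Icc 0 1))
    (hw : ContinuousOn w (Icc 0 1)) (hσ : ∀ n, σ n ∈ Icc (0 : ℝ) 1) {m : ℕ} (hm : m ≠ 0)
    (x : ℝ) : slack δ π w (Function.update σ m x) m
      = slack δ π w σ m + (π x + w x - (π (σ m) + w (σ m))) - (π x - π (σ m)) / (1 - δ) := by
  have h := discSum_comp_update (fun y => π y + w y)
    (summable_comp_of_continuousOn hδ (hπ.add hw) hσ m) le_rfl x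
  simp only [Nat.sub_self, pow_zero, one_mul] at h
  rw [slack, slack, h, Function.update_self, Function.update_of_ne (by omega)]
  ring

theorem Optimal.slack_eq_zero_of_lt (h : Optimal δ π w σ (bindingPay δ w σ))
    (hδ : δ ∈ Ioo 0 1) (hπ : ContinuousOn π (Icc 0 1)) (hw : ContinuousOn w (Icc 0 1))
    (hwa : StrictAntiOn w (Icc 0 1)) (hGm : StrictMonoOn (fun x => π x + w x) (Icc 0 1))
    {m : ℕ} (hm : m ≠ 0) (hlt : σ m < σ (m + 1)) : slack δ π w σ m = 0 := by
  obtain ⟨⟨hσ, hσ0, -⟩, hmono, -⟩ := h.1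
  have hiff (τ : ℕ → ℝ) := implementable_bindingPay_iff (σ := τ) hδ hπ hw hwa.antitoneOn
  have hslack := (hiff σ hσ hσ0 hmono).1 h.1
  refine le_antisymm (not_lt.1 fun hpos => ?_) (hslack m)
  -- Raise `σ m` to some `x` close enough that the slack at `m` stays nonnegative.
  have hsub : Ioc (σ m) (σ (m + 1)) ⊆ Icc 0 1 := fun y hy =>
    ⟨(hσ m).1.trans hy.1.le, hy.2.trans (hσ _).2⟩
  have hg : ContinuousOn
      (fun y => (π y - π (σ m)) / (1 - δ) - (π y + w y - (π (σ m) + w (σ m)))) (Icc 0 1) := by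
    fun_prop
  obtain ⟨x, hx, hgx⟩ := exists_mem_Ioc_lt hlt ((hg _ (hσ m)).mono hsub) (by simpa using hpos)
  set σ' := Function.update σ m x
  have hσ'0 : σ' 0 = σ 0 := Function.update_of_ne (Ne.symm hm) _ _
  have hσ' n : σ' n ∈ Icc (0 : ℝ) 1 := by
    rcases eq_or_ne n m with rfl | hn
    · simpa [σ'] using hsub hx
    · simpa [σ', hn] using hσ n
  have himpl : Implementable δ π w σ' (bindingPay δ w σ') := by
    refine (hiff σ' hσ' (hσ'0.trans hσ0) (hmono.update_nat hx.1.le hx.2)).2 fun t => ?_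
    rcases eq_or_ne t m with rfl | ht
    · rw [slack_update_self hδ hπ hw hσ hm]
      linarith
    · exact (hslack t).trans (slack_le_slack_of_le hδ hπ hw hGm.monotoneOn hwa.antitoneOn hσ hσ'
        (le_update_iff.2 ⟨hx.1.le, fun _ _ => le_rfl⟩) (Function.update_of_ne ht _ _))
  have hgain := h.2 _ _ himpl
  rw [PiVal_bindingPay hδ hπ hw hσ', PiVal_bindingPay hδ hπ hw hσ,
    slack_update_zero hδ hπ hw hσ hm, hσ'0] at hgain
  have : 0 < δ ^ m * (π x + w x - (π (σ m) + w (σ m))) :=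
    mul_pos (pow_pos hδ.1 m) (sub_pos.2 (hGm (hσ m) (hsub hx) hx.1))
  linarith

theorem Optimal.slack_le_mul_slack_succ (h : Optimal δ π w σ (bindingPay δ w σ))
    (hδ : δ ∈ Ioo 0 1) (hπ : ContinuousOn π (Icc 0 1)) (hw : ContinuousOn w (Icc 0 1))
    (hwa : StrictAntiOn w (Icc 0 1)) (hGm : StrictMonoOn (fun x => π x + w x) (Icc 0 1))
    {m : ℕ} (hm : m ≠ 0) : slack δ π w σ m ≤ δ * slack δ π w σ (m + 1) := by
  obtain ⟨⟨hσ, hσ0, -⟩, hmono, -⟩ := h.1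
  rcases (hmono m.le_succ).lt_or_eq with hlt | heq
  · rw [h.slack_eq_zero_of_lt hδ hπ hw hwa hGm hm hlt]
    exact mul_nonneg hδ.1.le
      ((implementable_bindingPay_iff hδ hπ hw hwa.antitoneOn hσ hσ0 hmono).1 h.1 _)
  · have hrec := slack_sub_mul_slack_succ hδ hπ hw hσ m
    rw [← heq, sub_self, mul_zero, zero_sub, neg_div] at hrec
    have := bindingPay_nonneg hδ.2 hwa.antitoneOn hσ hmono m
    rw [bindingPay] at this
    linarith

end Contract

theorem optimal_break_even_general
    (δ : ℝ) (hδ : δ ∈ Set.Ioo (0 : ℝ) 1) (π w : ℝ → ℝ)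
    (hπc : ContinuousOn π (Set.Icc 0 1)) (hwc : ContinuousOn w (Set.Icc 0 1))
    (hwa : StrictAntiOn w (Set.Icc 0 1))
    (hGm : StrictMonoOn (fun x => π x + w x) (Set.Icc 0 1))
    (s p : ℕ → ℝ) (hopt : Optimal δ π w s p) :
    BE δ π w s := by
  have hbind := hopt.optimal_bindingPay hδ hπc hwc hwa.antitoneOn
  obtain ⟨⟨hs, hs0, -⟩, hmono, -⟩ := hopt.1
  have hslack := (implementable_bindingPay_iff hδ hπc hwc hwa.antitoneOn hs hs0 hmono).1 hbind.1
  obtain ⟨C, hC⟩ := exists_slack_le hδ hπc hwc hs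
  have hzero t (ht : 1 ≤ t) : slack δ π w s t = 0 := by
    obtain ⟨n, rfl⟩ := Nat.exists_eq_add_of_le' ht
    refine le_antisymm ?_ (hslack _)
    exact nonpos_of_le_mul_succ (a := fun n => slack δ π w s (n + 1)) hδ.1.le hδ.2
      (fun n => hbind.slack_le_mul_slack_succ hδ hπc hwc hwa hGm n.succ_ne_zero) (fun n => hC _) n
  intro t ht
  have h := slack_sub_mul_slack_succ hδ hπc hwc hs t
  rw [hzero t ht, hzero (t + 1) (by omega), mul_zero, sub_zero, eq_comm, div_eq_zero_iff] at h
  exact sub_eq_zero.1 (h.resolve_right (sub_pos.2 hδ.2).ne')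

/-- Any optimal contract satisfies the break-even condition (BE). -/
theorem optimal_break_even
    (δ : ℝ) (hδ : δ ∈ Set.Ioo (0 : ℝ) 1) (π w : ℝ → ℝ)
    (hπc : ContinuousOn π (Set.Icc 0 1)) (hwc : ContinuousOn w (Set.Icc 0 1))
    (hπm : StrictMonoOn π (Set.Icc 0 1)) (hwa : StrictAntiOn w (Set.Icc 0 1))
    (hGm : StrictMonoOn (fun x => π x + w x) (Set.Icc 0 1))
    (s p : ℕ → ℝ) (hopt : Optimal δ π w s p) :
    BE δ π w s :=
  optimal_break_even_general δ hδ π w hπc hwc hwa hGm s p hopt
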